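/- arXiv:1703.08056 — 2 statements merged into one kernel-verified Lean document; each statement's English description precedes it below -/
import Mathlib

section
/- For the Betti number difference formula of a non-special curve: for integers d, g, p with d > g ≥ 0 and 0 ≤ p ≤ d - g - 1, the alternating diagonal sum equals b_{p+1,1} - b_{p,2} = (p+1) * C(d-g, p+1) * ((d+1-g)/(p+2) - d/(d-g)), i.e. as rational numbers, (p+1) * (d-g choose p+1) * ((d+1-g)*(d-g) - d*(p+2)) / ((p+2)*(d-g)) is an integer. -/
/-!
With `n = d - g`, the absorption identity `(n + 1) C(n, k) = C(n + 1, k + 1) (k + 1)`, used once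
at `n` and once at `n - 1`, rewrites the expression as `(p + 1) C(n + 1, p + 2) - d C(n - 1, p)`.
-/

theorem choose_mul_div_eq_sub {K : Type*} [Field K] [CharZero K] (n p : ℕ) (hn : n ≠ 0) (d : K) :
    ((p : K) + 1) * n.choose (p + 1) * (((n : K) + 1) * n - d * ((p : K) + 2)) /
        (((p : K) + 2) * n) =
      ((p : K) + 1) * (n + 1).choose (p + 2) - d * (n - 1).choose p := by
  have absorb_n : ((n : K) + 1) * n.choose (p + 1) = (n + 1).choose (p + 2) * ((p : K) + 2) := by
    exact_mod_cast Nat.add_one_mul_choose_eq n (p + 1)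
  have absorb_pred : (n : K) * (n - 1).choose p = n.choose (p + 1) * ((p : K) + 1) := by
    obtain ⟨m, rfl⟩ := Nat.exists_eq_succ_of_ne_zero hn
    exact_mod_cast Nat.add_one_mul_choose_eq m p
  rw [div_eq_iff (mul_ne_zero (by exact_mod_cast (p + 1).succ_ne_zero) (by exact_mod_cast hn))]
  linear_combination ((p : K) + 1) * n * absorb_n + d * ((p : K) + 2) * absorb_pred

theorem betti_difference_is_integer_general (d g p : ℕ) (hdg : g < d) :
    ∃ z : ℤ,
      (((p : ℚ) + 1) * ((d - g).choose (p + 1)) *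
          (((d : ℚ) + 1 - g) * ((d : ℚ) - g) - (d : ℚ) * ((p : ℚ) + 2))) /
        (((p : ℚ) + 2) * ((d : ℚ) - g)) = (z : ℚ) := by
  have hcast : ((d - g : ℕ) : ℚ) = (d : ℚ) - g := Nat.cast_sub hdg.le
  refine ⟨(p + 1) * (d - g + 1).choose (p + 2) - d * (d - g - 1).choose p, ?_⟩
  rw [add_sub_right_comm, ← hcast, choose_mul_div_eq_sub _ _ (Nat.sub_ne_zero_of_lt hdg)]
  push_cast
  rfl

/-- For integers `d > g ≥ 0` and `0 ≤ p ≤ d - g - 1`, the rational number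
`(p+1) * C(d-g, p+1) * ((d+1-g)*(d-g) - d*(p+2)) / ((p+2)*(d-g))`,
which computes the Betti number difference `b_{p+1,1} - b_{p,2}` of a
non-special curve of degree `d` and genus `g`, is an integer. -/
theorem betti_difference_is_integer (d g p : ℕ) (hdg : g < d) (hp : p ≤ d - g - 1) :
    ∃ z : ℤ,
      (((p : ℚ) + 1) * ((d - g).choose (p + 1)) *
          (((d : ℚ) + 1 - g) * ((d : ℚ) - g) - (d : ℚ) * ((p : ℚ) + 2))) /
        (((p : ℚ) + 2) * ((d : ℚ) - g)) = (z : ℚ) :=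
  betti_difference_is_integer_general d g p hdg
end

section
/- For a general canonical curve of even genus g = 2i+2, the formula b_{p,1} = ((2i-p+1)*(2i-2p+1)/(p+1)) * C(2i+1, p-1) defines a nonnegative integer for all 1 ≤ p ≤ i, and the formula b_{p,2} = ((2i-p)*(2p-2i+1)/(p+2)) * C(2i+1, p) defines a nonnegative integer for all i ≤ p ≤ 2i-1; moreover both b_{i,1} and b_{i,2} are positive when i ≥ 1. -/
private lemma betti_aux1 (i p : ℕ) (h1 : 1 ≤ p) (h2 : p ≤ i) :
    ∃ n : ℕ, ((2 * i - p + 1 : ℚ) * (2 * i - 2 * p + 1 : ℚ) / (p + 1)) *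
        ((2 * i + 1).choose (p - 1)) = (n : ℚ) := by
  have hp : (1:ℚ) ≤ p := by exact_mod_cast h1
  have hpi : (p:ℚ) ≤ i := by exact_mod_cast h2
  set m := 2 * i + 1 with hm
  have ha' := Nat.choose_succ_right_eq m (p - 1)
  rw [Nat.sub_add_cancel h1] at ha'
  have hsub : (m - (p - 1) : ℕ) = m - p + 1 := by omega
  rw [hsub] at ha'
  have hpm : p + 1 ≤ m := by omega
  have ha : ((m.choose p : ℚ)) * p = (m.choose (p-1)) * ((m:ℚ) - p + 1) := by
    qify [show p ≤ m by omega] at ha'; exact_mod_cast ha'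
  have hc' := Nat.choose_succ_right_eq m p
  have hc : ((m.choose (p+1) : ℚ)) * (p + 1) = (m.choose p) * ((m:ℚ) - p) := by
    qify [show p ≤ m by omega] at hc'; exact_mod_cast hc'
  set a : ℚ := (m.choose (p-1) : ℚ)
  set b : ℚ := (m.choose p : ℚ)
  set c : ℚ := (m.choose (p+1) : ℚ)
  have hz : ((2 * i - p + 1 : ℚ) * (2 * i - 2 * p + 1 : ℚ) / (p + 1)) * a
      = ((m:ℚ) - 2*p) * b + a - c := by
    rw [div_mul_eq_mul_div, div_eq_iff (by positivity : (p:ℚ) + 1 ≠ 0)]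
    have hmq : (m:ℚ) = 2*i + 1 := by push_cast [hm]; ring
    rw [hmq] at ha hc ⊢
    linear_combination (2*(p:ℚ) - 2*i) * ha + hc
  have hnn : 0 ≤ ((2 * i - p + 1 : ℚ) * (2 * i - 2 * p + 1 : ℚ) / (p + 1)) * a := by
    have : (0:ℚ) ≤ a := by positivity
    have h2' : (0:ℚ) ≤ 2 * i - p + 1 := by linarith
    have h3' : (0:ℚ) ≤ 2 * i - 2 * p + 1 := by linarith
    positivity
  set z : ℤ := ((m:ℤ) - 2*p) * m.choose p + m.choose (p-1) - m.choose (p+1) with hzdef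
  have hzq : ((z:ℚ)) = ((m:ℚ) - 2*p) * b + a - c := by push_cast [hzdef]; ring
  have hz0 : 0 ≤ z := by
    have : (0:ℚ) ≤ (z:ℚ) := by rw [hzq, ← hz]; exact hnn
    exact_mod_cast this
  refine ⟨z.toNat, ?_⟩
  rw [hz, ← hzq]
  exact_mod_cast congrArg (Int.cast : ℤ → ℚ) (by rw [Int.toNat_of_nonneg hz0] : ((z.toNat : ℤ)) = z) |>.symm

private lemma betti_aux2 (i p : ℕ) (hi : 1 ≤ i) (h1 : i ≤ p) (h2 : p ≤ 2 * i - 1) :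
    ∃ n : ℕ, ((2 * i - p : ℚ) * (2 * p - 2 * i + 1 : ℚ) / (p + 2)) *
        ((2 * i + 1).choose p) = (n : ℚ) := by
  have hp : (i:ℚ) ≤ p := by exact_mod_cast h1
  have hpi : (p:ℚ) ≤ 2 * i - 1 := by
    have : (p:ℚ) ≤ ((2*i-1 : ℕ) : ℚ) := by exact_mod_cast h2
    rwa [Nat.cast_sub (by omega), Nat.cast_mul, Nat.cast_ofNat, Nat.cast_one] at this
  set m := 2 * i + 1 with hm
  have hpm : p + 2 ≤ m := by omega
  have hb' := Nat.choose_succ_right_eq m p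
  have hb : ((m.choose (p+1) : ℚ)) * (p + 1) = (m.choose p) * ((m:ℚ) - p) := by
    qify [show p ≤ m by omega] at hb'; exact_mod_cast hb'
  have hc' := Nat.choose_succ_right_eq m (p+1)
  have hc : ((m.choose (p+2) : ℚ)) * (p + 2) = (m.choose (p+1)) * ((m:ℚ) - p - 1) := by
    qify [show p + 1 ≤ m by omega] at hc'
    push_cast at hc' ⊢
    linarith [hc']
  set a : ℚ := (m.choose p : ℚ)
  set b : ℚ := (m.choose (p+1) : ℚ)
  set c : ℚ := (m.choose (p+2) : ℚ)
  have hz : ((2 * i - p : ℚ) * (2 * p - 2 * i + 1 : ℚ) / (p + 2)) * a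
      = (2*(p:ℚ) - m + 2) * b - a + c := by
    rw [div_mul_eq_mul_div, div_eq_iff (by positivity : (p:ℚ) + 2 ≠ 0)]
    have hmq : (m:ℚ) = 2*i + 1 := by push_cast [hm]; ring
    rw [hmq] at hb hc ⊢
    linear_combination ((2*(i:ℚ)+1) - 2*p - 3) * hb - hc
  have hnn : 0 ≤ ((2 * i - p : ℚ) * (2 * p - 2 * i + 1 : ℚ) / (p + 2)) * a := by
    have : (0:ℚ) ≤ a := by positivity
    have h2' : (0:ℚ) ≤ 2 * i - p := by linarith
    have h3' : (0:ℚ) ≤ 2 * p - 2 * i + 1 := by linarith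
    positivity
  set z : ℤ := (2*(p:ℤ) - m + 2) * m.choose (p+1) - m.choose p + m.choose (p+2) with hzdef
  have hzq : ((z:ℚ)) = (2*(p:ℚ) - m + 2) * b - a + c := by push_cast [hzdef]; ring
  have hz0 : 0 ≤ z := by
    have : (0:ℚ) ≤ (z:ℚ) := by rw [hzq, ← hz]; exact hnn
    exact_mod_cast this
  refine ⟨z.toNat, ?_⟩
  rw [hz, ← hzq]
  exact_mod_cast congrArg (Int.cast : ℤ → ℚ) (by rw [Int.toNat_of_nonneg hz0] : ((z.toNat : ℤ)) = z) |>.symm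

/-- For a general canonical curve of even genus `g = 2i+2` with `i ≥ 1`:
`b_{p,1} = ((2i-p+1)(2i-2p+1)/(p+1)) * C(2i+1, p-1)` is a nonnegative integer
for `1 ≤ p ≤ i`, `b_{p,2} = ((2i-p)(2p-2i+1)/(p+2)) * C(2i+1, p)` is a
nonnegative integer for `i ≤ p ≤ 2i-1`, and both are positive at `p = i`. -/
theorem canonical_even_genus_betti (i : ℕ) (hi : 1 ≤ i) :
    (∀ p : ℕ, 1 ≤ p → p ≤ i →
      ∃ n : ℕ, ((2 * i - p + 1 : ℚ) * (2 * i - 2 * p + 1 : ℚ) / (p + 1)) *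
        ((2 * i + 1).choose (p - 1)) = (n : ℚ)) ∧
    (∀ p : ℕ, i ≤ p → p ≤ 2 * i - 1 →
      ∃ n : ℕ, ((2 * i - p : ℚ) * (2 * p - 2 * i + 1 : ℚ) / (p + 2)) *
        ((2 * i + 1).choose p) = (n : ℚ)) ∧
    (0 < ((2 * i - i + 1 : ℚ) * (2 * i - 2 * i + 1 : ℚ) / (i + 1)) *
        ((2 * i + 1).choose (i - 1))) ∧
    (0 < ((2 * i - i : ℚ) * (2 * i - 2 * i + 1 : ℚ) / (i + 2)) *
        ((2 * i + 1).choose i)) := by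
  have hiq : (1:ℚ) ≤ i := by exact_mod_cast hi
  have hch1 : (0:ℚ) < ((2 * i + 1).choose (i - 1) : ℚ) := by
    exact_mod_cast Nat.choose_pos (show i - 1 ≤ 2 * i + 1 by omega)
  have hch2 : (0:ℚ) < ((2 * i + 1).choose i : ℚ) := by
    exact_mod_cast Nat.choose_pos (show i ≤ 2 * i + 1 by omega)
  refine ⟨fun p hp1 hp2 => betti_aux1 i p hp1 hp2,
    fun p hp1 hp2 => betti_aux2 i p hi hp1 hp2, ?_, ?_⟩
  · rw [show (2 * (i:ℚ) - i + 1) = i + 1 from by ring,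
      show (2 * (i:ℚ) - 2 * i + 1) = 1 from by ring]
    have h0 : (0:ℚ) < (i:ℚ) + 1 := by linarith
    positivity
  · rw [show (2 * (i:ℚ) - i) = i from by ring,
      show (2 * (i:ℚ) - 2 * i + 1) = 1 from by ring]
    have h0 : (0:ℚ) < (i:ℚ) := by linarith
    positivity
end
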